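/- Let C' be a binary linear [n,k]-code with minimum distance at least d and maximum weight at most d', where d' < n. Let Ĉ be the span of C' and the all-one vector v. Then every nonzero codeword of Ĉ has weight at least min(d, n - d'). -/

import Mathlib

lemma norm_add_one (n : ℕ) (y : Fin n → ZMod 2) :
    hammingNorm (y + fun _ => (1 : ZMod 2)) = n - hammingNorm y := by
  have key : ∀ x : ZMod 2, (x + 1 ≠ 0 ↔ ¬ x ≠ 0) := by decide
  unfold hammingNorm
  simp only [Pi.add_apply]
  have h : (Finset.univ.filter fun i => y i + 1 ≠ 0) =
      Finset.univ.filter fun i => ¬ (y i ≠ 0) :=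
    Finset.filter_congr fun i _ => key (y i)
  rw [h, Finset.filter_not, Finset.card_sdiff_of_subset (Finset.filter_subset _ _),
    Finset.card_univ, Fintype.card_fin]

/-- If C' has minimum distance ≥ d and maximum weight ≤ d' < n, then every
nonzero codeword of the span of C' and the all-one vector has weight ≥ min(d, n - d'). -/
theorem stmt_3 (n k d d' : ℕ) (C' : Submodule (ZMod 2) (Fin n → ZMod 2))
    (hk : Module.finrank (ZMod 2) C' = k)
    (hd : ∀ c ∈ C', c ≠ 0 → d ≤ hammingNorm c)
    (hd' : ∀ c ∈ C', hammingNorm c ≤ d')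
    (hlt : d' < n)
    (v : Fin n → ZMod 2) (hv : v = fun _ => 1)
    (Chat : Submodule (ZMod 2) (Fin n → ZMod 2))
    (hChat : Chat = C' ⊔ Submodule.span (ZMod 2) {v}) :
    ∀ c ∈ Chat, c ≠ 0 → min d (n - d') ≤ hammingNorm c := by
  intro c hc hc0
  rw [hChat] at hc
  rcases Submodule.mem_sup.mp hc with ⟨y, hy, z, hz, rfl⟩
  rcases Submodule.mem_span_singleton.mp hz with ⟨a, rfl⟩
  have ha : a = 0 ∨ a = 1 := by fin_cases a; exacts [Or.inl rfl, Or.inr rfl]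
  rcases ha with rfl | rfl
  · simp only [zero_smul, add_zero] at hc0 ⊢
    exact le_trans (min_le_left _ _) (hd y hy hc0)
  · rw [one_smul, hv, norm_add_one n y]
    exact le_trans (min_le_right _ _) (Nat.sub_le_sub_left (hd' y hy) n)
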